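/- arXiv:1210.6305 — 8 statements merged into one kernel-verified Lean document; each statement's English description precedes it below -/
import Mathlib

section
/- Let $R$ be a commutative ring of characteristic $p>0$ Frobenius split by $\phi$, let $I \subseteq R$ be a compatibly split ideal, and let $J \subseteq R$ be any ideal. Then the colon ideal $(I : J) = \{a \in R \mid aJ \subseteq I\}$ is compatibly split, i.e. $\phi(I:J) \subseteq (I:J)$. -/
/-- Colon ideals of a compatibly split ideal by an arbitrary ideal are compatibly split. -/
theorem stmt_2 {R : Type*} [CommRing R] (p : ℕ) (hp : 0 < p) [CharP R p]
    (φ : R → R)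
    (hadd : ∀ a b : R, φ (a + b) = φ a + φ b)
    (hsemi : ∀ a b : R, φ (a ^ p * b) = a * φ b)
    (hone : φ 1 = 1)
    (I J : Ideal R)
    (hI : ∀ x ∈ I, φ x ∈ I) :
    ∀ a ∈ Submodule.colon I J, φ a ∈ Submodule.colon I J := by
  intro a ha
  rw [Submodule.mem_colon] at ha ⊢
  intro j hj
  have h1 : j ^ p * a ∈ I := by
    have : j ^ p * a = j ^ (p - 1) * (a * j) := by
      rw [mul_comm a j, ← mul_assoc, ← pow_succ, Nat.sub_add_cancel hp]
    rw [this]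
    have h2 : a * j ∈ I := by simpa [smul_eq_mul] using ha j hj
    exact Ideal.mul_mem_left I _ h2
  have := hI _ h1
  rw [hsemi] at this
  simpa [smul_eq_mul, mul_comm] using this
end

section
/- Let $A$ be a Noetherian integral domain of characteristic $p>0$ with fraction field $K$, Frobenius split by $\phi: A \to A$, and let $B$ be the integral closure of $A$ in $K$. Extend $\phi$ to $\tilde\phi$ on $K$ by $\tilde\phi(a_1/a_2) := \phi(a_2^{p-1}a_1)/a_2$. Then $\tilde\phi(B) \subseteq B$; in particular, the Frobenius splitting of $A$ extends to a Frobenius splitting of its normalization $B$. -/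
/-!
Let `x` be integral over `A` and let `I = {c ∈ K | c • A[x] ⊆ A}` be the conductor of `A[x]`
into `A`. Since `A[x]` is a finite `A`-module, `I` is nonzero, and as a submodule of `A` it is
finitely generated. The extension `ψ` is `p⁻¹`-linear, `ψ (u ^ p * v) = u * ψ v`, so for `c ∈ I`
and `y ∈ A[x]` we get `ψ x * c * y = ψ ((c * y) ^ p * x)`, where `(c * y) ^ p * x =
c ^ (p - 1) * (c * (y ^ p * x)) ∈ A`. Hence `ψ x • I ⊆ I`, and a faithful finitely generated
module stable under `ψ x` forces `ψ x` to be integral.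
-/

open Algebra Submodule

section Conductor

variable {A K : Type*} [CommRing A]

theorem mul_mem_conductor_of_pow_mul [CommRing K] [Algebra A K] {p : ℕ} (hp : 0 < p)
    {ψ : K → K} (hpow : ∀ u v : K, ψ (u ^ p * v) = u * ψ v)
    (hψ_one : ∀ z ∈ (1 : Submodule A K), ψ z ∈ (1 : Submodule A K))
    {x c : K} (hc : c ∈ 1 / Subalgebra.toSubmodule (adjoin A {x})) :
    ψ x * c ∈ 1 / Subalgebra.toSubmodule (adjoin A {x}) := by
  rw [mem_div_iff_forall_mul_mem] at hc ⊢
  intro y hy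
  have hc₁ : c ∈ (1 : Submodule A K) := by
    simpa using hc 1 (Subalgebra.one_mem _)
  have hmem : (c * y) ^ p * x ∈ (1 : Submodule A K) := by
    obtain ⟨q, rfl⟩ : ∃ q, p = q + 1 := ⟨p - 1, (Nat.succ_pred_eq_of_pos hp).symm⟩
    have hcx : c * (y ^ (q + 1) * x) ∈ (1 : Submodule A K) :=
      hc _ (Subalgebra.mul_mem _ (Subalgebra.pow_mem _ hy _) (self_mem_adjoin_singleton A x))
    have h := mul_mem_mul (pow_mem_pow _ hc₁ q) hcx
    rw [one_pow, one_mul] at h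
    convert h using 1
    ring
  convert hψ_one _ hmem using 1
  rw [hpow]
  ring

theorem isIntegral_of_mul_mem_conductor [IsDomain A] [IsNoetherianRing A] [Field K] [Algebra A K]
    [IsFractionRing A K] {x y : K} (hx : IsIntegral A x)
    (hy : ∀ c ∈ 1 / Subalgebra.toSubmodule (adjoin A {x}),
      y * c ∈ 1 / Subalgebra.toSubmodule (adjoin A {x})) :
    IsIntegral A y := by
  set I := 1 / Subalgebra.toSubmodule (adjoin A {x})
  have hI_le : I ≤ 1 := fun c hc ↦ by
    simpa using (mem_div_iff_forall_mul_mem.mp hc) 1 (Subalgebra.one_mem _)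
  have hI_fg : I.FG := FG.of_le (one_eq_span (R := A) (A := K) ▸ fg_span_singleton 1) hI_le
  have hI_ne : I ≠ ⊥ := by
    obtain ⟨a, ha, hint⟩ :=
      FractionalIdeal.isFractional_of_fg (S := nonZeroDivisors A) hx.fg_adjoin_singleton
    refine I.ne_bot_iff.mpr ⟨algebraMap A K a, mem_div_iff_forall_mul_mem.mpr fun b hb ↦ ?_,
      IsFractionRing.to_map_ne_zero_of_mem_nonZeroDivisors ha⟩
    obtain ⟨t, ht⟩ := hint b hb
    exact mem_one.mpr ⟨t, by rw [ht, Algebra.smul_def]⟩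
  exact isIntegral_of_smul_mem_submodule I hI_ne hI_fg y hy

end Conductor

section FractionField

variable {A K : Type*} [CommRing A] [IsDomain A] [Field K] [Algebra A K] [IsFractionRing A K]
  {p : ℕ} {φ : A → A} {ψ : K → K}

theorem extension_pow_mul (hp : 0 < p) (hsemi : ∀ a b : A, φ (a ^ p * b) = a * φ b)
    (hψ : ∀ a₁ a₂ : A, a₂ ≠ 0 →
      ψ (algebraMap A K a₁ / algebraMap A K a₂) = algebraMap A K (φ (a₂ ^ (p - 1) * a₁)) /
        algebraMap A K a₂)
    (u v : K) : ψ (u ^ p * v) = u * ψ v := by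
  obtain ⟨q, rfl⟩ : ∃ q, p = q + 1 := ⟨p - 1, (Nat.succ_pred_eq_of_pos hp).symm⟩
  simp only [Nat.add_sub_cancel] at hψ
  obtain ⟨c, d, hd, rfl⟩ := IsFractionRing.div_surjective (A := A) u
  obtain ⟨e, f, hf, rfl⟩ := IsFractionRing.div_surjective (A := A) v
  have hd0 : d ≠ 0 := nonZeroDivisors.ne_zero hd
  have hf0 : f ≠ 0 := nonZeroDivisors.ne_zero hf
  have hdK : algebraMap A K d ≠ 0 := IsFractionRing.to_map_ne_zero_of_mem_nonZeroDivisors hd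
  have hfK : algebraMap A K f ≠ 0 := IsFractionRing.to_map_ne_zero_of_mem_nonZeroDivisors hf
  have hquot : (algebraMap A K c / algebraMap A K d) ^ (q + 1) *
      (algebraMap A K e / algebraMap A K f) =
      algebraMap A K (c ^ (q + 1) * e) / algebraMap A K (d ^ (q + 1) * f) := by
    simp only [map_mul, map_pow, div_pow, div_mul_div_comm]
  have hnum : (d ^ (q + 1) * f) ^ q * (c ^ (q + 1) * e) = (d ^ q * c) ^ (q + 1) * (f ^ q * e) := by
    ring
  rw [hquot, hψ _ _ (mul_ne_zero (pow_ne_zero _ hd0) hf0), hnum, hsemi, hψ e f hf0]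
  simp only [map_mul, map_pow]
  field_simp
  ring

end FractionField

theorem stmt_3_general {A : Type*} [CommRing A] [IsDomain A] [IsNoetherianRing A]
    (p : ℕ) [Fact p.Prime]
    (φ : A → A)
    (hsemi : ∀ a b : A, φ (a ^ p * b) = a * φ b)
    (ψ : FractionRing A → FractionRing A)
    (hψ : ∀ a₁ a₂ : A, a₂ ≠ 0 →
      ψ (algebraMap A (FractionRing A) a₁ / algebraMap A (FractionRing A) a₂) =
        algebraMap A (FractionRing A) (φ (a₂ ^ (p - 1) * a₁)) /
          algebraMap A (FractionRing A) a₂) :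
    ∀ x ∈ integralClosure A (FractionRing A), ψ x ∈ integralClosure A (FractionRing A) := by
  intro x hx
  have hp : 0 < p := (Fact.out : p.Prime).pos
  have hψ_one : ∀ z ∈ (1 : Submodule A (FractionRing A)), ψ z ∈ (1 : Submodule A _) := by
    intro z hz
    obtain ⟨a, rfl⟩ := mem_one.mp hz
    exact mem_one.mpr ⟨φ a, by simpa using (hψ a 1 one_ne_zero).symm⟩
  exact isIntegral_of_mul_mem_conductor hx fun c hc ↦
    mul_mem_conductor_of_pow_mul hp (extension_pow_mul hp hsemi hψ) hψ_one hc

/-- A Frobenius splitting of a Noetherian domain `A` extends to its integral closure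
in the fraction field: the canonical extension `ψ` of `φ` to `Frac(A)` preserves the
integral closure `B`. -/
theorem stmt_3 {A : Type*} [CommRing A] [IsDomain A] [IsNoetherianRing A]
    (p : ℕ) [Fact p.Prime] [CharP A p]
    (φ : A → A)
    (hadd : ∀ a b : A, φ (a + b) = φ a + φ b)
    (hsemi : ∀ a b : A, φ (a ^ p * b) = a * φ b)
    (hone : φ 1 = 1)
    (ψ : FractionRing A → FractionRing A)
    (hψ : ∀ a₁ a₂ : A, a₂ ≠ 0 →
      ψ (algebraMap A (FractionRing A) a₁ / algebraMap A (FractionRing A) a₂) =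
        algebraMap A (FractionRing A) (φ (a₂ ^ (p - 1) * a₁)) /
          algebraMap A (FractionRing A) a₂) :
    ∀ x ∈ integralClosure A (FractionRing A), ψ x ∈ integralClosure A (FractionRing A) :=
  stmt_3_general p φ hsemi ψ hψ
end

section
/- Let $A$ be a Noetherian domain of characteristic $p>0$ with Frobenius splitting $\phi$, let $B$ be its integral closure in $\mathrm{Frac}(A)$, and let $I = \{a \in A \mid aB \subseteq A\}$ be the conductor ideal. Then $I$ is compatibly split: $\phi(I) \subseteq I$. -/
/-- The conductor ideal `{a ∈ A | a·B ⊆ A}` of the integral closure `B` of a Noetherian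
domain `A` (inside `Frac A`) is compatibly split under any Frobenius splitting of `A`. -/
theorem stmt_4 {A : Type*} [CommRing A] [IsDomain A] [IsNoetherianRing A]
    (p : ℕ) [Fact p.Prime] [CharP A p]
    (φ : A → A)
    (hadd : ∀ a b : A, φ (a + b) = φ a + φ b)
    (hsemi : ∀ a b : A, φ (a ^ p * b) = a * φ b)
    (hone : φ 1 = 1) :
    ∀ a : A,
      (∀ b ∈ integralClosure A (FractionRing A),
        ∃ a' : A, algebraMap A (FractionRing A) a * b = algebraMap A (FractionRing A) a') →
      (∀ b ∈ integralClosure A (FractionRing A),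
        ∃ a' : A, algebraMap A (FractionRing A) (φ a) * b = algebraMap A (FractionRing A) a') := by
  intro a ha b hb
  obtain ⟨c, hc⟩ := ha (b ^ p) (pow_mem hb p)
  obtain ⟨⟨x, y⟩, hxy⟩ := IsLocalization.surj (nonZeroDivisors A) b
  simp only at hxy
  have hy0 : (y : A) ≠ 0 := nonZeroDivisors.ne_zero y.2
  have hy : algebraMap A (FractionRing A) (y : A) ≠ 0 := by
    simpa using (IsFractionRing.to_map_eq_zero_iff (K := FractionRing A)).not.2 hy0
  refine ⟨φ c, ?_⟩
  have key : c * (y : A) ^ p = a * x ^ p := by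
    apply IsFractionRing.injective A (FractionRing A)
    have hbp : b ^ p * algebraMap A (FractionRing A) ((y : A) ^ p)
        = algebraMap A (FractionRing A) (x ^ p) := by
      rw [map_pow, map_pow, ← mul_pow, hxy]
    calc algebraMap A (FractionRing A) (c * (y : A) ^ p)
        = algebraMap A (FractionRing A) c * algebraMap A (FractionRing A) ((y : A) ^ p) := by
          rw [map_mul]
      _ = algebraMap A (FractionRing A) a * (b ^ p * algebraMap A (FractionRing A) ((y : A) ^ p)) := by
          rw [← hc]; ring
      _ = algebraMap A (FractionRing A) (a * x ^ p) := by rw [hbp, ← map_mul]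
  have heq : (y : A) * φ c = x * φ a := by
    have h1 : φ ((y : A) ^ p * c) = (y : A) * φ c := hsemi _ _
    have h2 : φ (x ^ p * a) = x * φ a := hsemi _ _
    rw [← h1, ← h2, mul_comm ((y : A) ^ p) c, key, mul_comm a (x ^ p)]
  apply mul_right_cancel₀ hy
  rw [mul_assoc, hxy, ← map_mul, ← map_mul, mul_comm (φ c) (y : A), heq, mul_comm]
end

section
/- Let $L/K$ be a finite extension of fields of characteristic $p>0$, and let $\phi: L \to L$ be a Frobenius splitting of $L$ (an additive map with $\phi(a^p b) = a\phi(b)$ and $\phi(1)=1$) whose restriction to $K$ is a Frobenius splitting of $K$ (i.e. $\phi(K) \subseteq K$). Then $\mathrm{Tr}_{L/K} \circ \phi = \phi \circ \mathrm{Tr}_{L/K}$ as maps $L \to K$. -/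
open Module Polynomial

private lemma trace_pow_char_aux {K L : Type*} [Field K] [Field L] [Algebra K L]
    [FiniteDimensional K L] [Algebra.IsSeparable K L] (p : ℕ) (hp : p.Prime) [CharP K p]
    (y : L) : Algebra.trace K L (y ^ p) = Algebra.trace K L y ^ p := by
  haveI : Fact p.Prime := ⟨hp⟩
  haveI : CharP (AlgebraicClosure K) p :=
    charP_of_injective_algebraMap (algebraMap K (AlgebraicClosure K)).injective p
  haveI : ExpChar (AlgebraicClosure K) p := .prime hp
  apply (algebraMap K (AlgebraicClosure K)).injective
  rw [trace_eq_sum_embeddings (AlgebraicClosure K) (x := y ^ p),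
    map_pow (algebraMap K (AlgebraicClosure K)),
    trace_eq_sum_embeddings (AlgebraicClosure K) (x := y), sum_pow_char]
  exact Finset.sum_congr rfl fun σ _ => map_pow σ y p

private lemma trace_eq_zero_aux {K L : Type*} [Field K] [Field L] [Algebra K L]
    [FiniteDimensional K L] (p : ℕ) (hp : p.Prime) [CharP K p] [CharP L p]
    (hsep : ¬ Algebra.IsSeparable K L) (x : L) : Algebra.trace K L x = 0 := by
  set S := separableClosure K L with hSdef
  haveI : IsPurelyInseparable S L := separableClosure.isPurelyInseparable K L
  haveI : CharP S p := charP_of_injective_algebraMap (algebraMap K S).injective p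
  haveI : ExpChar S p := .prime hp
  haveI : FiniteDimensional S L := FiniteDimensional.right K S L
  have hST : (S : IntermediateField K L) ≠ ⊤ := fun h =>
    hsep ((separableClosure.eq_top_iff K L).1 h)
  obtain ⟨z, hz⟩ : ∃ z : L, z ∉ S := by
    by_contra h; push_neg at h
    exact hST (SetLike.ext fun w => ⟨fun _ => IntermediateField.mem_top, fun _ => h w⟩)
  have hzint : IsIntegral (↥S) z := IsIntegral.of_finite _ z
  have hdvd : p ∣ finrank (↥S) L := by
    obtain ⟨m, b, hmb⟩ := IsPurelyInseparable.minpoly_eq_X_pow_sub_C S p z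
    have hm : m ≠ 0 := by
      rintro rfl
      rw [pow_zero, pow_one] at hmb
      have h0 := minpoly.aeval (↥S) z
      rw [hmb] at h0
      simp only [map_sub, aeval_X, aeval_C, sub_eq_zero] at h0
      exact hz (h0 ▸ b.2)
    have h1 : finrank (↥S) ↥(IntermediateField.adjoin (↥S) {z}) = p ^ m := by
      rw [IntermediateField.adjoin.finrank hzint, hmb, Polynomial.natDegree_X_pow_sub_C]
    have h2 := Module.finrank_mul_finrank (↥S) ↥(IntermediateField.adjoin (↥S) {z}) L
    rw [← h2, h1]
    exact Dvd.dvd.mul_right (dvd_pow_self p hm) _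
  have key : ∀ y : L, Algebra.trace (↥S) L y = 0 := by
    intro y
    have hyint : IsIntegral (↥S) y := IsIntegral.of_finite _ y
    obtain ⟨n, a, hmin⟩ := IsPurelyInseparable.minpoly_eq_X_pow_sub_C S p y
    rcases Nat.eq_zero_or_pos n with rfl | hn
    · rw [pow_zero, pow_one] at hmin
      have h0 := minpoly.aeval (↥S) y
      rw [hmin] at h0
      simp only [map_sub, aeval_X, aeval_C, sub_eq_zero] at h0
      rw [h0, Algebra.trace_algebraMap]
      obtain ⟨c, hc⟩ := hdvd
      rw [hc, mul_smul]
      have : (p : ↥S) = 0 := CharP.cast_eq_zero (↥S) p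
      rw [nsmul_eq_mul, this, zero_mul]
    · rw [trace_eq_trace_adjoin (↥S) y]
      have hgen : Algebra.trace (↥S) (↥(IntermediateField.adjoin (↥S) {y})) (IntermediateField.AdjoinSimple.gen (↥S) y) = 0 := by
        rw [← IntermediateField.adjoin.powerBasis_gen hyint,
          PowerBasis.trace_gen_eq_nextCoeff_minpoly]
        have hminpb : minpoly (↥S) (IntermediateField.adjoin.powerBasis hyint).gen
            = minpoly (↥S) y := by
          rw [IntermediateField.adjoin.powerBasis_gen hyint,
            ← minpoly.algebraMap_eq (algebraMap (↥(IntermediateField.adjoin (↥S) {y})) L).injective,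
            IntermediateField.AdjoinSimple.algebraMap_gen]
        have h2 : 1 < p ^ n := Nat.one_lt_pow hn.ne' hp.one_lt
        rw [hminpb, hmin, nextCoeff, Polynomial.natDegree_X_pow_sub_C]
        have h3 : ¬ (p ^ n = 0) := by omega
        have h4 : p ^ n - 1 ≠ p ^ n := by omega
        have h5 : p ^ n - 1 ≠ 0 := by omega
        simp [h3, h4, h5, coeff_X_pow, coeff_C]
      rw [hgen, smul_zero]
  rw [← Algebra.trace_trace (S := ↥S), key x, map_zero]

/-- For a finite extension `L/K` of characteristic-`p` fields and a Frobenius splitting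
`φ` of `L` restricting to a Frobenius splitting `φK` of `K`, the trace commutes with the
splitting: `Tr_{L/K} ∘ φ = φ ∘ Tr_{L/K}`. -/
theorem stmt_6 {K L : Type*} [Field K] [Field L] [Algebra K L] [FiniteDimensional K L]
    (p : ℕ) (hp : 0 < p) [CharP K p] [CharP L p]
    (φ : L → L)
    (hadd : ∀ a b : L, φ (a + b) = φ a + φ b)
    (hsemi : ∀ a b : L, φ (a ^ p * b) = a * φ b)
    (hone : φ 1 = 1)
    (φK : K → K)
    (hrest : ∀ x : K, φ (algebraMap K L x) = algebraMap K L (φK x))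
    (hKadd : ∀ a b : K, φK (a + b) = φK a + φK b)
    (hKsemi : ∀ a b : K, φK (a ^ p * b) = a * φK b)
    (hKone : φK 1 = 1) :
    ∀ x : L, Algebra.trace K L (φ x) = φK (Algebra.trace K L x) := by
  intro x
  have hp' : p.Prime := by
    rcases CharP.char_is_prime_or_zero K p with h | h
    · exact h
    · omega
  have hφK0 : φK 0 = 0 := add_left_cancel (a := φK 0) (by rw [← hKadd, add_zero, add_zero])
  by_cases hsep : Algebra.IsSeparable K L
  · haveI : ExpChar K p := .prime hp'
    have hspan : Submodule.span K (Set.range fun y : L => y ^ p ^ 1) = ⊤ :=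
      Field.span_map_pow_expChar_pow_eq_top_of_isSeparable p 1 (v := id)
        (by rw [Set.range_id, Submodule.span_univ])
    have hx : x ∈ Submodule.span K (Set.range fun y : L => y ^ p ^ 1) := by
      rw [hspan]; trivial
    obtain ⟨m, c, g, hxsum⟩ := Submodule.mem_span_set'.mp hx
    choose y hy using fun i => (g i).2
    let Φ : L →+ L := AddMonoidHom.mk' φ hadd
    let ΦK : K →+ K := AddMonoidHom.mk' φK hKadd
    have hterm : ∀ i, φ (c i • (g i : L)) = φK (c i) • y i := by
      intro i
      have : c i • (g i : L) = (y i) ^ p * algebraMap K L (c i) := by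
        rw [Algebra.smul_def, mul_comm, ← hy i]; ring_nf
      rw [this, hsemi, hrest, mul_comm, ← Algebra.smul_def]
    have hφsum : φ x = ∑ i, φK (c i) • y i := by
      rw [← hxsum]
      calc Φ (∑ i, c i • (g i : L)) = ∑ i, Φ (c i • (g i : L)) := map_sum Φ _ _
        _ = ∑ i, φK (c i) • y i := Finset.sum_congr rfl fun i _ => hterm i
    have hTx : Algebra.trace K L x = ∑ i, c i * (Algebra.trace K L (y i)) ^ p := by
      rw [← hxsum, map_sum]
      refine Finset.sum_congr rfl fun i _ => ?_
      rw [map_smul, smul_eq_mul]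
      congr 1
      have : (g i : L) = (y i) ^ p := by rw [← hy i]; ring_nf
      rw [this, trace_pow_char_aux p hp']
    rw [hφsum, hTx, map_sum]
    calc ∑ i, Algebra.trace K L (φK (c i) • y i)
        = ∑ i, φK (c i) * Algebra.trace K L (y i) := by
          refine Finset.sum_congr rfl fun i _ => ?_
          rw [map_smul, smul_eq_mul]
      _ = φK (∑ i, c i * (Algebra.trace K L (y i)) ^ p) := by
          calc ∑ i, φK (c i) * Algebra.trace K L (y i)
              = ∑ i, φK (c i * (Algebra.trace K L (y i)) ^ p) := by
                refine Finset.sum_congr rfl fun i _ => ?_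
                rw [mul_comm (c i), hKsemi, mul_comm]
            _ = φK (∑ i, c i * (Algebra.trace K L (y i)) ^ p) :=
                (map_sum ΦK _ _).symm
  · rw [trace_eq_zero_aux p hp' hsep (φ x), trace_eq_zero_aux p hp' hsep x, hφK0]
end

section
/- Let $R$ be a ring of characteristic $p>0$ multigraded by $\mathbb{Z}^r$, with a Frobenius splitting $\phi$ that is multigraded in the sense that $\phi(R_\lambda) \subseteq R_{\lambda/p}$ (interpreted as $0$ unless $p$ divides each coordinate of $\lambda$). Suppose additionally $R$ is $\mathbb{N}$-graded compatibly, and let $I$ be the 'face ideal' $I = \bigoplus_{n}\bigoplus_{\mu \in P(R), \langle\alpha,\mu\rangle<\beta} R_{n\mu,n}$ associated to a valid inequality $\langle\alpha,\mu\rangle \leq \beta$ of the moment polyhedron $P(R)$. Then $\phi(I) \subseteq I$, i.e. $I$ is compatibly split. -/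
/-!
Put `ℓ(λ, s) = ⟨α, λ⟩ - β s`, additive in the degree. Validity says `ℓ ≤ 0` on every nonzero
piece with `s > 0`; in a domain this extends to nonzero pieces with `s = 0`, by applying it to
`bⁿ g` for all `n` and a fixed nonzero `g` with `s > 0`. Hence `b g` with `b` homogeneous and `g`
a generator of `I` is again zero or a generator, so `I` is additively spanned by generators.
A multigraded `φ` sends a generator of degree `(λ, s)` to zero or into degree `(λ / p, s / p)`,
which represents the same point `λ / s` of the polyhedron, so to a generator.
-/

theorem nonpos_of_forall_nsmul_add_nonpos {G : Type*} [AddCommGroup G] [LinearOrder G]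
    [IsOrderedAddMonoid G] [Archimedean G] {c e : G} (h : ∀ n : ℕ, n • c + e ≤ 0) : c ≤ 0 := by
  by_contra! hc
  obtain ⟨n, hn⟩ := Archimedean.arch (-e) hc
  have hpos : 0 < (n + 1) • c + e := by
    rw [succ_nsmul, add_right_comm]
    exact add_pos_of_nonneg_of_pos (neg_le_iff_add_nonneg.mp hn) hc
  exact (h (n + 1)).not_gt hpos

theorem Ideal.apply_mem_of_mem_span_of_homogeneous_mul_mem {ι σ R M : Type*} [DecidableEq ι]
    [Semiring R] [SetLike σ R] [AddSubmonoidClass σ R] (𝒜 : ι → σ) [DirectSum.Decomposition 𝒜]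
    [AddCommMonoid M] (f : R →+ M) (N : AddSubmonoid M) {S : Set R}
    (h : ∀ i, ∀ b ∈ 𝒜 i, ∀ g ∈ S, f (b * g) ∈ N) {x : R} (hx : x ∈ Ideal.span S) : f x ∈ N := by
  classical
  suffices ∀ a, f (a * x) ∈ N by simpa using this 1
  induction hx using Submodule.span_induction with
  | mem g hg =>
    intro a
    rw [← DirectSum.sum_support_decompose 𝒜 a, Finset.sum_mul, map_sum]
    exact _root_.sum_mem fun j _ => h j _ (SetLike.coe_mem _) g hg
  | zero => simp
  | add y z _ _ hy hz =>
    intro a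
    rw [mul_add, map_add]
    exact N.add_mem (hy a) (hz a)
  | smul c y _ hy =>
    intro a
    rw [smul_eq_mul, ← mul_assoc]
    exact hy _

theorem apply_nonpos_of_mem_of_ne_zero {M σ R G : Type*} [AddCommMonoid M] [Semiring R]
    [NoZeroDivisors R] [SetLike σ R] [AddSubmonoidClass σ R] (𝒜 : M × ℕ → σ)
    [SetLike.GradedMonoid 𝒜] [AddCommGroup G] [LinearOrder G] [IsOrderedAddMonoid G]
    [Archimedean G] (ℓ : M × ℕ →+ G) (hℓ : ∀ d, 0 < d.2 → ∀ x ∈ 𝒜 d, x ≠ 0 → ℓ d ≤ 0)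
    {d e : M × ℕ} {x y : R} (hx : x ∈ 𝒜 d) (hx0 : x ≠ 0) (hy : y ∈ 𝒜 e) (hy0 : y ≠ 0)
    (he : 0 < e.2) : ℓ d ≤ 0 :=
  nonpos_of_forall_nsmul_add_nonpos (e := ℓ e) fun n => by
    rw [← map_nsmul, ← map_add]
    refine hℓ _ ?_ (x ^ n * y) (SetLike.mul_mem_graded (SetLike.pow_mem_graded n hx) hy)
      (mul_ne_zero (pow_ne_zero n hx0) hy0)
    simp only [Prod.snd_add, Prod.smul_snd]
    omega

theorem cast_div_div_cast_div_of_dvd {a : ℤ} {s p : ℕ} (ha : (p : ℤ) ∣ a) (hs : p ∣ s) :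
    ((a / p : ℤ) : ℚ) / ((s / p : ℕ) : ℚ) = a / s := by
  obtain ⟨b, rfl⟩ := ha
  obtain ⟨t, rfl⟩ := hs
  rcases Nat.eq_zero_or_pos p with rfl | hp
  · simp
  rw [Int.mul_ediv_cancel_left _ (by exact_mod_cast hp.ne'), Nat.mul_div_cancel_left _ hp]
  push_cast
  exact (mul_div_mul_left _ _ (by exact_mod_cast hp.ne')).symm

def homogenizedInequality {r : ℕ} (α : Fin r → ℚ) (β : ℚ) : (Fin r → ℤ) × ℕ →+ ℚ where
  toFun d := ∑ i, α i * d.1 i - β * d.2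
  map_zero' := by simp
  map_add' d e := by
    simp only [Prod.fst_add, Prod.snd_add, Pi.add_apply, Int.cast_add, Nat.cast_add, mul_add,
      Finset.sum_add_distrib]
    ring

section homogenizedInequality

variable {r : ℕ} (α : Fin r → ℚ) (β : ℚ) {lam : Fin r → ℤ} {s : ℕ}

theorem sum_mul_div_eq :
    ∑ i, α i * ((lam i : ℚ) / s) = (homogenizedInequality α β (lam, s) + β * s) / s := by
  simp only [homogenizedInequality, AddMonoidHom.coe_mk, ZeroHom.coe_mk, sub_add_cancel,
    Finset.sum_div, mul_div_assoc]

theorem sum_mul_div_lt_iff (hs : 0 < s) :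
    ∑ i, α i * ((lam i : ℚ) / s) < β ↔ homogenizedInequality α β (lam, s) < 0 := by
  rw [sum_mul_div_eq α β, div_lt_iff₀ (by exact_mod_cast hs)]
  constructor <;> intro h <;> linarith

theorem sum_mul_div_le_iff (hs : 0 < s) :
    ∑ i, α i * ((lam i : ℚ) / s) ≤ β ↔ homogenizedInequality α β (lam, s) ≤ 0 := by
  rw [sum_mul_div_eq α β, div_le_iff₀ (by exact_mod_cast hs)]
  constructor <;> intro h <;> linarith

theorem sum_mul_div_lt_of_mul_ne_zero {σ R : Type*} [Semiring R] [NoZeroDivisors R]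
    [SetLike σ R] [AddSubmonoidClass σ R] (𝒜 : (Fin r → ℤ) × ℕ → σ) [SetLike.GradedMonoid 𝒜]
    (hvalid : ∀ (lam : Fin r → ℤ) (s : ℕ), 0 < s → ∀ x ∈ 𝒜 (lam, s), x ≠ 0 →
      ∑ i, α i * ((lam i : ℚ) / s) ≤ β)
    {mu : Fin r → ℤ} {t : ℕ} {b g : R} (hb : b ∈ 𝒜 (mu, t)) (hg : g ∈ 𝒜 (lam, s))
    (hbg : b * g ≠ 0) (hs : 0 < s) (hlt : ∑ i, α i * ((lam i : ℚ) / s) < β) :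
    ∑ i, α i * (((mu + lam) i : ℚ) / (t + s : ℕ)) < β := by
  obtain ⟨hb0, hg0⟩ := mul_ne_zero_iff.1 hbg
  have hℓ : ∀ d : (Fin r → ℤ) × ℕ, 0 < d.2 → ∀ x ∈ 𝒜 d, x ≠ 0 →
      homogenizedInequality α β d ≤ 0 :=
    fun d hd x hx hx0 => (sum_mul_div_le_iff α β hd).1 (hvalid d.1 d.2 hd x hx hx0)
  rw [sum_mul_div_lt_iff α β (Nat.add_pos_right _ hs), ← Prod.mk_add_mk, map_add]
  exact add_neg_of_nonpos_of_neg (apply_nonpos_of_mem_of_ne_zero 𝒜 _ hℓ hb hb0 hg hg0 hs)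
    ((sum_mul_div_lt_iff α β hs).1 hlt)

end homogenizedInequality

theorem stmt_14_general {k R : Type*} [Field k] [CommRing R] [IsDomain R]
    [Algebra k R] {r : ℕ}
    (p : ℕ)
    (𝒜 : (Fin r → ℤ) × ℕ → Submodule k R) [GradedRing 𝒜]
    (φ : R → R)
    (hadd : ∀ a b : R, φ (a + b) = φ a + φ b)
    (hgraded : ∀ (lam : Fin r → ℤ) (s : ℕ), ∀ x ∈ 𝒜 (lam, s),
      ((p ∣ s ∧ ∀ i, (p : ℤ) ∣ lam i) →
        φ x ∈ 𝒜 (fun i => lam i / (p : ℤ), s / p)) ∧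
      (¬(p ∣ s ∧ ∀ i, (p : ℤ) ∣ lam i) → φ x = 0))
    (α : Fin r → ℚ) (β : ℚ)
    (hvalid : ∀ (lam : Fin r → ℤ) (s : ℕ), 0 < s → 𝒜 (lam, s) ≠ ⊥ →
      ∑ i, α i * ((lam i : ℚ) / (s : ℚ)) ≤ β)
    (I : Ideal R)
    (hI : I = Ideal.span {x : R | ∃ (lam : Fin r → ℤ) (s : ℕ),
      0 < s ∧ x ∈ 𝒜 (lam, s) ∧ ∑ i, α i * ((lam i : ℚ) / (s : ℚ)) < β}) :
    ∀ x ∈ I, φ x ∈ I := by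
  have hφ : ∀ (lam : Fin r → ℤ) (s : ℕ), 0 < s → ∑ i, α i * ((lam i : ℚ) / s) < β →
      ∀ x ∈ 𝒜 (lam, s), φ x ∈ I := by
    intro lam s hs hlt x hx
    by_cases hdvd : p ∣ s ∧ ∀ i, (p : ℤ) ∣ lam i
    · have hp : 0 < p := Nat.pos_of_dvd_of_pos hdvd.1 hs
      rw [hI]
      refine Ideal.subset_span ⟨_, _, Nat.div_pos (Nat.le_of_dvd hs hdvd.1) hp,
        (hgraded lam s x hx).1 hdvd, ?_⟩
      simpa only [cast_div_div_cast_div_of_dvd (hdvd.2 _) hdvd.1] using hlt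
    · rw [(hgraded lam s x hx).2 hdvd]
      exact I.zero_mem
  intro x hx
  rw [hI] at hx
  refine Ideal.apply_mem_of_mem_span_of_homogeneous_mul_mem 𝒜 (AddMonoidHom.mk' φ hadd)
    I.toAddSubmonoid ?_ hx
  rintro ⟨mu, t⟩ b hb g ⟨lam, s, hs, hg, hlt⟩
  by_cases hbg : b * g = 0
  · rw [hbg, map_zero]
    exact I.zero_mem
  refine hφ _ _ (Nat.add_pos_right _ hs) ?_ _ (SetLike.mul_mem_graded hb hg)
  exact sum_mul_div_lt_of_mul_ne_zero α β 𝒜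
    (fun lam s hs x hx hx0 => hvalid lam s hs ((Submodule.ne_bot_iff _).2 ⟨x, hx, hx0⟩))
    hb hg hbg hs hlt

/-- A multigraded Frobenius splitting compatibly splits face ideals of the moment
polyhedron: let `R` be a ring of characteristic `p`, bigraded by `ℤʳ × ℕ` (over a field
`k`), with a Frobenius splitting `φ` that is multigraded (`φ(R_{λ,s}) ⊆ R_{λ/p,s/p}`,
zero unless `p` divides all degrees).  Then for any valid inequality `⟨α,·⟩ ≤ β` of the
moment polyhedron, the associated face ideal `I` satisfies `φ(I) ⊆ I`. -/
theorem stmt_14 {k R : Type*} [Field k] [CommRing R] [IsDomain R] [IsNoetherianRing R]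
    [Algebra k R] {r : ℕ}
    (p : ℕ) [Fact p.Prime] [CharP R p]
    (𝒜 : (Fin r → ℤ) × ℕ → Submodule k R) [GradedRing 𝒜]
    (φ : R → R)
    (hadd : ∀ a b : R, φ (a + b) = φ a + φ b)
    (hsemi : ∀ a b : R, φ (a ^ p * b) = a * φ b)
    (hone : φ 1 = 1)
    (hgraded : ∀ (lam : Fin r → ℤ) (s : ℕ), ∀ x ∈ 𝒜 (lam, s),
      ((p ∣ s ∧ ∀ i, (p : ℤ) ∣ lam i) →
        φ x ∈ 𝒜 (fun i => lam i / (p : ℤ), s / p)) ∧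
      (¬(p ∣ s ∧ ∀ i, (p : ℤ) ∣ lam i) → φ x = 0))
    (α : Fin r → ℚ) (β : ℚ)
    (hvalid : ∀ (lam : Fin r → ℤ) (s : ℕ), 0 < s → 𝒜 (lam, s) ≠ ⊥ →
      ∑ i, α i * ((lam i : ℚ) / (s : ℚ)) ≤ β)
    (I : Ideal R)
    (hI : I = Ideal.span {x : R | ∃ (lam : Fin r → ℤ) (s : ℕ),
      0 < s ∧ x ∈ 𝒜 (lam, s) ∧ ∑ i, α i * ((lam i : ℚ) / (s : ℚ)) < β}) :
    ∀ x ∈ I, φ x ∈ I :=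
  stmt_14_general p 𝒜 φ hadd hgraded α β hvalid I hI
end

section
/- Suppose $k[x_1,\dots,x_n]$ carries a $\mathbb{Z}^r$-multigrading and $f \in k[x_1,\dots,x_n]$ is homogeneous for this multigrading. If $\mathrm{Tr}(f^{p-1}\cdot)$ is a Frobenius splitting of $k[x_1,\dots,x_n]$, then it is a multigraded splitting: for any monomial $m$ of multidegree $\mu$ with $\mathrm{Tr}(f^{p-1}m) \neq 0$, the multidegree $\mu$ is divisible by $p$ (and $\mathrm{Tr}(f^{p-1}m)$ has multidegree $\mu/p$). Consequently, every compatibly split ideal is homogeneous for the multigrading (i.e. torus-invariant). -/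
/-!
Since `Tr (f ^ (p - 1)) = 1`, the monomial `(x₁⋯xₙ) ^ (p - 1)` occurs in `f ^ (p - 1)`, so the
homogeneous polynomial `f ^ (p - 1)` has its multidegree. As `Tr` sends
`x ^ (p • E + (p - 1, …, p - 1))` to `x ^ E` and kills all other monomials,
`φ = Tr (f ^ (p - 1) * ·)` divides multidegrees by `p`.

If `I` is compatible with `φ`, `g ∈ I` and `h` is the degree-`μ` component of `g`, then for large
`N` we get `φᴺ (h ^ (pᴺ - 1) * g) = h ∈ I`: `φᴺ (h ^ pᴺ) = h * φᴺ 1 = h`, while `φᴺ` kills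
`h ^ (pᴺ - 1) * (g - h)`, whose multidegrees `pᴺ • μ + (ν - μ)` with `0 < |ν - μ| < pᴺ` are not
divisible by `pᴺ`.
-/

open MvPolynomial

/-- The trace map `Tr` on `k[x₁,…,xₙ]` (see the standard Frobenius splitting). -/
noncomputable def Tr {k : Type*} [Field k] (p n : ℕ) [Fact p.Prime] [CharP k p]
    [PerfectRing k p] (f : MvPolynomial (Fin n) k) : MvPolynomial (Fin n) k :=
  ∑ d ∈ f.support,
    if ∀ i, p ∣ (d i + 1) then
      MvPolynomial.monomial
        (Finsupp.mapRange (fun m => (m + 1) / p - 1)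
          (by simp [Nat.div_eq_of_lt (Fact.out : p.Prime).one_lt]) d)
        ((frobeniusEquiv k p).symm (f.coeff d))
    else 0

/-- The multidegree of an exponent vector `d` for the `ℤʳ`-multigrading with variable
weights `w`. -/
def wdeg {n r : ℕ} (w : Fin n → Fin r → ℤ) (d : Fin n →₀ ℕ) : Fin r → ℤ :=
  fun j => ∑ i, (d i : ℤ) * w i j

open Filter

theorem wdeg_eq_weight {n r : ℕ} (w : Fin n → Fin r → ℤ) : wdeg w = ⇑(Finsupp.weight w) := by
  ext d j
  simp [wdeg, Finsupp.weight_apply, Finsupp.sum_fintype]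

def DividesWeightsBy {σ R M : Type*} [CommSemiring R] [AddCommMonoid M] (p : ℕ) (w : σ → M)
    (φ : MvPolynomial σ R → MvPolynomial σ R) : Prop :=
  ∀ d c, ∀ e ∈ (φ (monomial d c)).support, p • Finsupp.weight w e = Finsupp.weight w d

section Trace

variable {k : Type*} [Field k] {p n : ℕ} [Fact p.Prime] [CharP k p] [PerfectRing k p]

theorem smul_add_mem_support_of_mem_support_Tr {Q : MvPolynomial (Fin n) k}
    {E : Fin n →₀ ℕ} (hE : E ∈ (Tr p n Q).support) :
    p • E + Finsupp.equivFunOnFinite.symm (fun _ => p - 1) ∈ Q.support := by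
  have hp : 0 < p := (Fact.out : p.Prime).pos
  rw [mem_support_iff] at hE
  simp only [Tr, coeff_sum] at hE
  obtain ⟨D, hD, hne⟩ := Finset.exists_ne_zero_of_sum_ne_zero hE
  split_ifs at hne with hdvd
  · rw [coeff_monomial] at hne
    split_ifs at hne with hDE
    · subst hDE
      convert hD using 1
      ext i
      obtain ⟨t, ht⟩ := hdvd i
      simp only [Finsupp.add_apply, Finsupp.smul_apply, Finsupp.mapRange_apply,
        Finsupp.coe_equivFunOnFinite_symm, ht, Nat.mul_div_cancel_left t hp, smul_eq_mul]
      rcases t with _ | t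
      · omega
      · rw [Nat.mul_succ] at ht
        rw [Nat.add_sub_cancel]
        omega
    · exact absurd rfl hne
  · exact absurd (coeff_zero E) hne

theorem dividesWeightsBy_Tr_mul {M : Type*} [AddCommMonoid M] [IsLeftCancelAdd M]
    {w : Fin n → M} {F : MvPolynomial (Fin n) k} {ν : M} (hF : IsWeightedHomogeneous w F ν)
    (hρ : Finsupp.equivFunOnFinite.symm (fun _ => p - 1) ∈ F.support) :
    DividesWeightsBy p w (fun g => Tr p n (F * g)) := by
  intro d c E hE
  have hFd := hF.mul (isWeightedHomogeneous_monomial w d c rfl)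
  have hD := hFd (mem_support_iff.mp (smul_add_mem_support_of_mem_support_Tr hE))
  rw [map_add, map_nsmul, hF (mem_support_iff.mp hρ), add_comm] at hD
  exact add_left_cancel hD

end Trace

theorem pow_apply_pow_pow_mul {A : Type*} [Semiring A] {p : ℕ} {φ : AddMonoid.End A}
    (hsemi : ∀ a b, φ (a ^ p * b) = a * φ b) (N : ℕ) (a b : A) :
    (φ ^ N) (a ^ p ^ N * b) = a * (φ ^ N) b := by
  induction N generalizing a b with
  | zero => simp
  | succ N ih =>
    rw [pow_succ, AddMonoid.End.coe_mul]
    simp only [Function.comp_apply]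
    rw [pow_succ, pow_mul, hsemi, ih]

theorem eventually_ne_pow_smul {ι : Type*} {p : ℕ} {x : ι → ℤ} (hx : x ≠ 0) (hp : 1 < p) :
    ∀ᶠ N in atTop, ∀ y : ι → ℤ, x ≠ p ^ N • y := by
  obtain ⟨j, hj⟩ := Function.ne_iff.mp hx
  filter_upwards [eventually_ge_atTop (x j).natAbs] with N hN y hxy
  have hdvd : p ^ N ∣ (x j).natAbs :=
    ⟨(y j).natAbs, by rw [hxy, Pi.smul_apply, nsmul_eq_mul, Int.natAbs_mul]; simp⟩
  have := Nat.le_of_dvd (Int.natAbs_pos.mpr hj) hdvd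
  have := Nat.lt_pow_self (n := N) hp
  omega

section DividesWeightsBy

variable {σ R M : Type*} [CommSemiring R] [AddCommMonoid M] {p : ℕ} {w : σ → M}
  {φ : AddMonoid.End (MvPolynomial σ R)}

theorem DividesWeightsBy.exists_smul_weight_eq (hφ : DividesWeightsBy p w φ)
    {z : MvPolynomial σ R} {E : σ →₀ ℕ} (hE : E ∈ (φ z).support) :
    ∃ d ∈ z.support, p • Finsupp.weight w E = Finsupp.weight w d := by
  classical
  rw [← support_sum_monomial_coeff z, map_sum] at hE
  obtain ⟨d, hd, hEd⟩ := Finset.mem_biUnion.mp (support_sum hE)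
  exact ⟨d, hd, hφ d _ E hEd⟩

theorem DividesWeightsBy.exists_pow_smul_weight_eq (hφ : DividesWeightsBy p w φ)
    (N : ℕ) {z : MvPolynomial σ R} {E : σ →₀ ℕ} (hE : E ∈ ((φ ^ N) z).support) :
    ∃ d ∈ z.support, p ^ N • Finsupp.weight w E = Finsupp.weight w d := by
  induction N generalizing E with
  | zero => exact ⟨E, hE, one_smul _ _⟩
  | succ N ih =>
    rw [pow_succ', AddMonoid.End.coe_mul, Function.comp_apply] at hE
    obtain ⟨d', hd', hEd'⟩ := hφ.exists_smul_weight_eq hE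
    obtain ⟨d, hd, hd'd⟩ := ih hd'
    exact ⟨d, hd, by rw [pow_succ, mul_smul, hEd', hd'd]⟩

end DividesWeightsBy

theorem weightedHomogeneousComponent_mem_of_compatible {σ ι R : Type*} [CommRing R] {p : ℕ}
    {w : σ → ι → ℤ} {φ : AddMonoid.End (MvPolynomial σ R)} (hp : 1 < p)
    (hφ : DividesWeightsBy p w φ) (hsemi : ∀ a b, φ (a ^ p * b) = a * φ b) (hone : φ 1 = 1)
    {I : Ideal (MvPolynomial σ R)} (hI : ∀ g ∈ I, φ g ∈ I) {g : MvPolynomial σ R} (hg : g ∈ I)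
    (μ : ι → ℤ) : weightedHomogeneousComponent w μ g ∈ I := by
  classical
  set h := weightedHomogeneousComponent w μ g
  have hh : IsWeightedHomogeneous w h μ := weightedHomogeneousComponent_isWeightedHomogeneous μ g
  have hq : ∀ b ∈ (g - h).support, Finsupp.weight w b - μ ≠ 0 := by
    intro b hb hbμ
    rw [mem_support_iff, coeff_sub, coeff_weightedHomogeneousComponent,
      if_pos (sub_eq_zero.mp hbμ), sub_self] at hb
    exact hb rfl
  obtain ⟨N, hN⟩ := ((eventually_all_finset _).mpr fun b hb =>
    eventually_ne_pow_smul (hq b hb) hp).exists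
  have hpN : p ^ N - 1 + 1 = p ^ N := Nat.sub_add_cancel (Nat.one_le_pow _ _ (by omega))
  have hkill : (φ ^ N) (h ^ (p ^ N - 1) * (g - h)) = 0 := by
    refine support_eq_empty.mp (Finset.eq_empty_of_forall_notMem fun E hE => ?_)
    obtain ⟨D, hD, hDE⟩ := hφ.exists_pow_smul_weight_eq N hE
    obtain ⟨a, ha, b, hb, rfl⟩ := Finset.mem_add.mp (support_mul _ _ hD)
    refine hN b hb (Finsupp.weight w E - μ) ?_
    have hpμ : p ^ N • μ = (p ^ N - 1) • μ + μ := by rw [← succ_nsmul, hpN]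
    rw [smul_sub, hDE, map_add, (hh.pow _) (mem_support_iff.mp ha), hpμ]
    abel
  have hmain : (φ ^ N) (h ^ (p ^ N - 1) * g) = h := by
    rw [← add_sub_cancel h g, mul_add, map_add, hkill, add_zero, ← pow_succ, hpN,
      ← mul_one (h ^ p ^ N), pow_apply_pow_pow_mul hsemi, AddMonoid.End.coe_pow,
      Function.iterate_fixed hone, mul_one]
  rw [← hmain, AddMonoid.End.coe_pow]
  exact Set.MapsTo.iterate hI N (I.mul_mem_left _ hg)

/-- If `f` is homogeneous for a `ℤʳ`-multigrading and `Tr(f^{p-1}·)` is a Frobenius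
splitting, then the splitting is multigraded: whenever `Tr(f^{p-1}m) ≠ 0` for a monomial
`m` of multidegree `μ`, `p` divides `μ` and the result is homogeneous of multidegree
`μ/p`.  Consequently every compatibly split ideal is homogeneous for the multigrading. -/
theorem stmt_15 {k : Type*} [Field k] (p n r : ℕ) [Fact p.Prime] [CharP k p]
    [PerfectRing k p]
    (w : Fin n → Fin r → ℤ)
    (f : MvPolynomial (Fin n) k) (δ : Fin r → ℤ)
    (hhomog : ∀ d ∈ f.support, wdeg w d = δ)
    (φ : MvPolynomial (Fin n) k → MvPolynomial (Fin n) k)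
    (hφ : φ = fun g => Tr p n (f ^ (p - 1) * g))
    (hadd : ∀ a b, φ (a + b) = φ a + φ b)
    (hsemi : ∀ a b, φ (a ^ p * b) = a * φ b)
    (hone : φ 1 = 1) :
    (∀ (d : Fin n →₀ ℕ) (c : k), φ (monomial d c) ≠ 0 →
      (∀ j, (p : ℤ) ∣ wdeg w d j) ∧
      ∀ e ∈ (φ (monomial d c)).support, ∀ j, wdeg w e j = wdeg w d j / (p : ℤ)) ∧
    (∀ I : Ideal (MvPolynomial (Fin n) k), (∀ g ∈ I, φ g ∈ I) →
      ∀ g ∈ I, ∀ μ : Fin r → ℤ,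
        (∑ d ∈ g.support, if wdeg w d = μ then monomial d (g.coeff d) else 0) ∈ I) := by
  have hp : p.Prime := Fact.out
  have hf : IsWeightedHomogeneous w (f ^ (p - 1)) ((p - 1) • δ) :=
    IsWeightedHomogeneous.pow (fun d hd => wdeg_eq_weight w ▸ hhomog d (mem_support_iff.mpr hd)) _
  have hTr : Tr p n (f ^ (p - 1)) = 1 := by simpa [hφ] using hone
  have hρ : Finsupp.equivFunOnFinite.symm (fun _ => p - 1) ∈ (f ^ (p - 1)).support := by
    have h0 : (0 : Fin n →₀ ℕ) ∈ (Tr p n (f ^ (p - 1))).support := by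
      rw [hTr, mem_support_iff, coeff_zero_one]
      exact one_ne_zero
    simpa using smul_add_mem_support_of_mem_support_Tr h0
  have hdiv : DividesWeightsBy p w φ := hφ ▸ dividesWeightsBy_Tr_mul hf hρ
  rw [wdeg_eq_weight]
  refine ⟨fun d c hne => ?_, fun I hI g hg μ => ?_⟩
  · have hdivj : ∀ e ∈ (φ (monomial d c)).support, ∀ j,
        Finsupp.weight w d j = p * Finsupp.weight w e j := fun e he j => by
      simp [← hdiv d c e he]
    obtain ⟨e₀, he₀⟩ := support_nonempty.mpr hne
    exact ⟨fun j => ⟨_, hdivj e₀ he₀ j⟩, fun e he j => by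
      rw [hdivj e he j, Int.mul_ediv_cancel_left _ (by exact_mod_cast hp.ne_zero)]⟩
  · convert weightedHomogeneousComponent_mem_of_compatible (φ := AddMonoidHom.mk' φ hadd)
      hp.one_lt hdiv hsemi hone hI hg μ using 1
    rw [weightedHomogeneousComponent_apply, Finset.sum_filter]
end

section
/- Let $X$ be a regular (nonsingular) variety over an algebraically closed field of characteristic $p>0$, and let $\sigma_1, \sigma_2 \in H^0(X, \omega_X^{-1})$ be anticanonical sections such that: (i) both $\sigma_1^{p-1}$ and $\sigma_2^{p-1}$ are splitting sections of $X$; (ii) $\sigma_1$ and $\sigma_2$ have the same vanishing locus; (iii) every global nonvanishing regular function on $X$ is constant. Then $\sigma_1^{p-1} = \sigma_2^{p-1}$. -/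
/-!
A splitting section `σ^{p-1}` makes `σ` radical: if `σ ∣ g^p` then
`g = ψ(σ^{p-1} g^p)` is divisible by `σ`. In a Jacobson ring radical ideals are determined by
the maximal ideals containing them, so equal vanishing loci give `σ₂ = c σ₁` with `c ∈ k`.
Writing `c = d^p`, semilinearity gives `1 = ψ(σ₂^{p-1}) = d^{p-1} ψ(σ₁^{p-1}) = d^{p-1}`.
-/

section Splitting

variable {R : Type*} [CommRing R] {p : ℕ} {ψ : R → R}

theorem dvd_of_dvd_pow_of_splitting (hp : 0 < p) (hψ : ∀ a b, ψ (a ^ p * b) = a * ψ b)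
    {σ : R} (hσ : ψ (σ ^ (p - 1)) = 1) {g : R} (hg : σ ∣ g ^ p) : σ ∣ g := by
  obtain ⟨r, hr⟩ := hg
  refine ⟨ψ r, ?_⟩
  calc g = ψ (g ^ p * σ ^ (p - 1)) := by rw [hψ, hσ, mul_one]
    _ = ψ (σ ^ p * r) := by
      rw [hr, mul_comm σ, mul_assoc, ← pow_succ', Nat.sub_add_cancel hp, mul_comm]
    _ = σ * ψ r := hψ σ r

theorem isRadical_of_splitting (hp : 1 < p) (hψ : ∀ a b, ψ (a ^ p * b) = a * ψ b)
    {σ : R} (hσ : ψ (σ ^ (p - 1)) = 1) : IsRadical σ :=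
  (isRadical_iff_pow_one_lt p hp).2 fun _ ↦ dvd_of_dvd_pow_of_splitting (by omega) hψ hσ

theorem eq_one_of_splitting_of_splitting_pow_mul (hψ : ∀ a b, ψ (a ^ p * b) = a * ψ b)
    {σ e : R} (hσ : ψ (σ ^ (p - 1)) = 1) (he : ψ (e ^ p * σ ^ (p - 1)) = 1) : e = 1 := by
  rwa [hψ, hσ, mul_one] at he

end Splitting

theorem Ideal.eq_of_isRadical_of_forall_isMaximal {R : Type*} [CommRing R] [IsJacobsonRing R]
    {I J : Ideal R} (hI : I.IsRadical) (hJ : J.IsRadical)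
    (h : ∀ P : Ideal R, P.IsMaximal → (I ≤ P ↔ J ≤ P)) : I = J := by
  rw [← IsJacobsonRing.out' I hI, ← IsJacobsonRing.out' J hJ, Ideal.jacobson, Ideal.jacobson]
  congr 1
  ext P
  exact and_congr_left (h P)

theorem associated_of_isRadical_of_forall_isMaximal {R : Type*} [CommRing R] [IsDomain R]
    [IsJacobsonRing R] {x y : R} (hx : IsRadical x) (hy : IsRadical y)
    (h : ∀ P : Ideal R, P.IsMaximal → (x ∈ P ↔ y ∈ P)) : Associated x y := by
  rw [← Ideal.span_singleton_eq_span_singleton]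
  refine Ideal.eq_of_isRadical_of_forall_isMaximal (isRadical_iff_span_singleton.1 hx)
    (isRadical_iff_span_singleton.1 hy) fun P hP ↦ ?_
  simpa only [Ideal.span_singleton_le_iff_mem] using h P hP

theorem stmt_17_general {k R : Type*} [Field k] [IsAlgClosed k] (p : ℕ) [Fact p.Prime]
    [CommRing R] [IsDomain R] [Algebra k R]
    (hfin : Algebra.FiniteType k R)
    (ψ : R → R)
    (hψsemi : ∀ a b : R, ψ (a ^ p * b) = a * ψ b)
    (σ₁ σ₂ : R)
    (hsplit₁ : ψ (σ₁ ^ (p - 1)) = 1)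
    (hsplit₂ : ψ (σ₂ ^ (p - 1)) = 1)
    (hvan : ∀ P : Ideal R, P.IsMaximal → (σ₁ ∈ P ↔ σ₂ ∈ P))
    (hunits : ∀ u : Rˣ, ∃ c : k, (u : R) = algebraMap k R c) :
    σ₁ ^ (p - 1) = σ₂ ^ (p - 1) := by
  have hp : p.Prime := Fact.out
  have : IsJacobsonRing R := isJacobsonRing_of_finiteType (A := k)
  obtain ⟨u, hu⟩ := associated_of_isRadical_of_forall_isMaximal
    (isRadical_of_splitting hp.one_lt hψsemi hsplit₁)
    (isRadical_of_splitting hp.one_lt hψsemi hsplit₂) hvan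
  obtain ⟨c, hc⟩ := hunits u
  obtain ⟨d, hd⟩ := IsAlgClosed.exists_pow_nat_eq c hp.pos
  have hσ₂ : σ₂ ^ (p - 1) = (algebraMap k R d ^ (p - 1)) ^ p * σ₁ ^ (p - 1) := by
    rw [← hu, mul_pow, hc, ← hd, map_pow]
    ring
  have hd₁ : algebraMap k R d ^ (p - 1) = 1 :=
    eq_one_of_splitting_of_splitting_pow_mul hψsemi hsplit₁ (hσ₂ ▸ hsplit₂)
  rw [hσ₂, hd₁, one_pow, one_mul]

/-- (Affine model, with the anticanonical sheaf trivialized so that anticanonical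
sections are ring elements and `p⁻¹`-linear maps `ψ` play the role of the Cartier
operator.)  Let `R` be a domain of finite type over an algebraically closed field `k`
of characteristic `p > 0` (a variety), and let `σ₁, σ₂ ∈ R` be such that
(i) `f ↦ ψ(σᵢ^{p-1} f)` is a Frobenius splitting for `i = 1, 2`;
(ii) `σ₁` and `σ₂` have the same vanishing locus;
(iii) every nonvanishing function (unit of `R`) is a constant from `k`.
Then `σ₁^{p-1} = σ₂^{p-1}`. -/
theorem stmt_17 {k R : Type*} [Field k] [IsAlgClosed k] (p : ℕ) [Fact p.Prime] [CharP k p]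
    [CommRing R] [IsDomain R] [Algebra k R] [CharP R p]
    (hfin : Algebra.FiniteType k R)
    (ψ : R → R)
    (hψadd : ∀ a b : R, ψ (a + b) = ψ a + ψ b)
    (hψsemi : ∀ a b : R, ψ (a ^ p * b) = a * ψ b)
    (σ₁ σ₂ : R)
    (hsplit₁ : ψ (σ₁ ^ (p - 1)) = 1)
    (hsplit₂ : ψ (σ₂ ^ (p - 1)) = 1)
    (hvan : ∀ P : Ideal R, P.IsMaximal → (σ₁ ∈ P ↔ σ₂ ∈ P))
    (hunits : ∀ u : Rˣ, ∃ c : k, (u : R) = algebraMap k R c) :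
    σ₁ ^ (p - 1) = σ₂ ^ (p - 1) :=
  stmt_17_general p hfin ψ hψsemi σ₁ σ₂ hsplit₁ hsplit₂ hvan hunits
end

section
/- For the Hilbert scheme patch coordinates in the case $n=2$: let $f_2 = a_1 b_1 a_2 b_2 - a_1^2 b_2 + a_2^2 b_2^2 \in k[a_1,b_1,a_2,b_2]$ over an algebraically closed field $k$ of characteristic $p>2$. There exists a weighting of the variables under which the initial term of $f_2$ is the squarefree monomial $a_1 b_1 a_2 b_2$; consequently $\mathrm{Tr}(f_2^{p-1}\cdot)$ defines a Frobenius splitting of $k[a_1,b_1,a_2,b_2]$ that compatibly splits the hypersurface $\{f_2 = 0\}$. -/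
/-!
`Tr` is additive and satisfies `Tr (a ^ p * g) = a * Tr g`, so `Tr (f ^ (p - 1) * ·)` is
`p⁻¹`-linear, and it maps `(f)` into `(f)` because `f ^ (p - 1) * (f * h) = f ^ p * h`.
For `Tr (f₂ ^ (p - 1)) = 1`, write `f₂ = a₁b₁a₂b₂ + B` with `B` free of `b₁`: in the binomial
expansion of `f₂ ^ (p - 1)` every term except `(a₁b₁a₂b₂) ^ (p - 1)` has `b₁`-degree `< p - 1`
and is killed by `Tr`, while `Tr (∏ xᵢ ^ (p - 1)) = 1`. The weighting `(1, 4, 1, 1)` gives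
`a₁b₁a₂b₂` weight 7, against 3 for `a₁²b₂` and 4 for `a₂²b₂²`.
-/

open MvPolynomial

lemma degreeOf_prod_X_le_one {R σ : Type*} [CommSemiring R] [Nontrivial R] [Fintype σ] (i : σ) :
    degreeOf i (∏ j, X j : MvPolynomial σ R) ≤ 1 := by
  classical
  calc degreeOf i (∏ j, X j : MvPolynomial σ R)
      ≤ ∑ j, degreeOf i (X j : MvPolynomial σ R) := degreeOf_prod_le i _ _
    _ = 1 := by simp [degreeOf_X]

section Trace

variable {k : Type*} [Field k] (p : ℕ) [Fact p.Prime] [CharP k p] [PerfectRing k p] {n : ℕ}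

noncomputable def trTerm (d : Fin n →₀ ℕ) : k →+ MvPolynomial (Fin n) k where
  toFun c :=
    if ∀ i, p ∣ (d i + 1) then
      monomial
        (Finsupp.mapRange (fun m => (m + 1) / p - 1)
          (by simp [Nat.div_eq_of_lt (Fact.out : p.Prime).one_lt]) d)
        ((frobeniusEquiv k p).symm c)
    else 0
  map_zero' := by split <;> simp
  map_add' _ _ := by split <;> simp

-- `Tr p n` unfolds definitionally to this lift, so it inherits additivity.
noncomputable def trHom : MvPolynomial (Fin n) k →+ MvPolynomial (Fin n) k :=
  (Finsupp.liftAddHom (trTerm p)).comp AddMonoidAlgebra.coeffAddEquiv.toAddMonoidHom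

lemma Tr_add (f g : MvPolynomial (Fin n) k) : Tr p n (f + g) = Tr p n f + Tr p n g :=
  map_add (trHom p) f g

lemma Tr_sum {ι : Type*} (s : Finset ι) (f : ι → MvPolynomial (Fin n) k) :
    Tr p n (∑ i ∈ s, f i) = ∑ i ∈ s, Tr p n (f i) :=
  map_sum (trHom p) f s

lemma Tr_monomial (d : Fin n →₀ ℕ) (c : k) : Tr p n (monomial d c) = trTerm p d c :=
  Finsupp.liftAddHom_apply_single (trTerm p) d c

lemma trTerm_nsmul_add (d e : Fin n →₀ ℕ) (c c' : k) :
    trTerm p (p • d + e) (c ^ p * c') = monomial d c * trTerm p e c' := by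
  simp only [trTerm, AddMonoidHom.coe_mk, ZeroHom.coe_mk, Finsupp.add_apply, Finsupp.smul_apply,
    smul_eq_mul, add_assoc, Nat.dvd_add_right (dvd_mul_right p _)]
  split_ifs with he
  · rw [monomial_mul, map_mul, ← frobenius_def, frobeniusEquiv_symm_apply_frobenius]
    congr 2
    ext i
    obtain ⟨q, hq⟩ := he i
    have hp := (Fact.out : p.Prime).pos
    have hq0 : 0 < q := Nat.pos_of_ne_zero (by rintro rfl; omega)
    rw [Finsupp.mapRange_apply, Finsupp.add_apply, Finsupp.add_apply, Finsupp.mapRange_apply,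
      Finsupp.smul_apply, smul_eq_mul, add_assoc, hq, ← Nat.mul_add, Nat.mul_div_cancel_left _ hp,
      Nat.mul_div_cancel_left _ hp]
    omega
  · rw [mul_zero]

lemma Tr_pow_mul (a g : MvPolynomial (Fin n) k) : Tr p n (a ^ p * g) = a * Tr p n g := by
  induction a using MvPolynomial.induction_on' with
  | monomial d c =>
    induction g using MvPolynomial.induction_on' with
    | monomial e c' => rw [monomial_pow, monomial_mul, Tr_monomial, Tr_monomial, trTerm_nsmul_add]
    | add g g' hg hg' => rw [mul_add, Tr_add, Tr_add, hg, hg', mul_add]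
  | add a b ha hb => rw [add_pow_char, add_mul, Tr_add, ha, hb, add_mul]

lemma Tr_eq_zero_of_degreeOf_lt {g : MvPolynomial (Fin n) k} (i : Fin n)
    (hg : degreeOf i g < p - 1) : Tr p n g = 0 := by
  refine Finset.sum_eq_zero fun d hd => if_neg fun hdvd => ?_
  have hp := Nat.le_of_dvd (Nat.succ_pos _) (hdvd i)
  have hdi := monomial_le_degreeOf i hd
  omega

lemma Tr_prod_X_pow_pred : Tr p n (∏ i, X i ^ (p - 1) : MvPolynomial (Fin n) k) = 1 := by
  have hp := (Fact.out : p.Prime).pos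
  simp only [X_pow_eq_monomial, ← monomial_sum_one, Tr_monomial, trTerm, AddMonoidHom.coe_mk,
    ZeroHom.coe_mk, Finsupp.coe_finsetSum, Finset.sum_apply, Finsupp.single_apply,
    Finset.sum_ite_eq', Finset.mem_univ, if_true, Nat.sub_add_cancel hp, dvd_refl, implies_true,
    map_one]
  rw [one_def]
  congr 2
  ext i
  simp only [Finsupp.mapRange_apply, Finsupp.coe_finsetSum, Finset.sum_apply, Finsupp.single_apply,
    Finset.sum_ite_eq', Finset.mem_univ, if_true, Nat.sub_add_cancel hp, Nat.div_self hp,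
    Finsupp.coe_zero, Pi.zero_apply, Nat.sub_self]

lemma Tr_prod_X_add_pow_pred {B : MvPolynomial (Fin n) k} (i : Fin n) (hB : degreeOf i B = 0) :
    Tr p n ((∏ j, X j + B) ^ (p - 1)) = 1 := by
  rw [add_pow, Finset.sum_range_succ, Tr_add, Tr_sum, Nat.sub_self, pow_zero,
    Nat.choose_self, Nat.cast_one, mul_one, mul_one, ← Finset.prod_pow, Tr_prod_X_pow_pred,
    Finset.sum_eq_zero, zero_add]
  intro j hj
  refine Tr_eq_zero_of_degreeOf_lt p i (lt_of_le_of_lt ?_ (Finset.mem_range.mp hj))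
  calc degreeOf i ((∏ j, X j) ^ j * B ^ (p - 1 - j) * ((p - 1).choose j : MvPolynomial (Fin n) k))
      ≤ j * 1 + (p - 1 - j) * 0 + 0 := by
        refine (degreeOf_mul_le _ _ _).trans (add_le_add ((degreeOf_mul_le _ _ _).trans
          (add_le_add ((degreeOf_pow_le _ _ _).trans ?_) ((degreeOf_pow_le _ _ _).trans ?_))) ?_)
        · exact Nat.mul_le_mul_left _ (degreeOf_prod_X_le_one i)
        · rw [hB]
        · rw [← map_natCast C, degreeOf_C]
    _ = j := by ring

lemma Tr_pow_pred_mul_mem_span {f g : MvPolynomial (Fin n) k} (hg : g ∈ Ideal.span {f}) :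
    Tr p n (f ^ (p - 1) * g) ∈ Ideal.span {f} := by
  obtain ⟨h, rfl⟩ := Ideal.mem_span_singleton.mp hg
  have hp := (Fact.out : p.Prime).pos
  rw [← mul_assoc, ← pow_succ, Nat.sub_add_cancel hp, Tr_pow_mul]
  exact Ideal.mul_mem_right _ _ (Ideal.mem_span_singleton_self f)

end Trace

lemma exists_weight_initialTerm_f₂ {R : Type*} [CommRing R] :
    ∃ w : Fin 4 → ℤ, ∀ d ∈ (X 0 * X 1 * X 2 * X 3 - X 0 ^ 2 * X 3 + X 2 ^ 2 * X 3 ^ 2 :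
      MvPolynomial (Fin 4) R).support, (∀ i, d i = 1) ∨ ∑ i, w i * (d i : ℤ) < ∑ i, w i := by
  refine ⟨![1, 4, 1, 1], fun d hd => ?_⟩
  simp only [X, monomial_pow, monomial_mul, one_pow, mul_one] at hd
  rcases Finset.mem_union.mp (support_add hd) with hd | hd
  · rcases Finset.mem_union.mp (support_sub _ _ _ hd) with hd | hd
    · left
      obtain rfl := Finset.mem_singleton.mp (support_monomial_subset hd)
      simp [Fin.forall_fin_succ, Finsupp.single_apply]
    · right
      obtain rfl := Finset.mem_singleton.mp (support_monomial_subset hd)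
      simp [Fin.sum_univ_four, Finsupp.single_apply]
  · right
    obtain rfl := Finset.mem_singleton.mp (support_monomial_subset hd)
    simp [Fin.sum_univ_four, Finsupp.single_apply]

theorem stmt_19_general {k : Type*} [Field k] (p : ℕ) [Fact p.Prime] [CharP k p]
    [PerfectRing k p]
    (f₂ : MvPolynomial (Fin 4) k)
    (hf₂ : f₂ = X 0 * X 1 * X 2 * X 3 - X 0 ^ 2 * X 3 + X 2 ^ 2 * X 3 ^ 2)
    (φ : MvPolynomial (Fin 4) k → MvPolynomial (Fin 4) k)
    (hφ : φ = fun g => Tr p 4 (f₂ ^ (p - 1) * g)) :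
    (∃ w : Fin 4 → ℤ, ∀ d ∈ f₂.support, (∀ i, d i = 1) ∨
      ∑ i, w i * (d i : ℤ) < ∑ i, w i) ∧
    (∀ a b, φ (a + b) = φ a + φ b) ∧
    (∀ a b, φ (a ^ p * b) = a * φ b) ∧
    (φ 1 = 1) ∧
    (∀ g ∈ Ideal.span {f₂}, φ g ∈ Ideal.span {f₂}) := by
  subst hφ
  beta_reduce
  refine ⟨hf₂ ▸ exists_weight_initialTerm_f₂, fun a b => by rw [mul_add, Tr_add],
    fun a b => by rw [mul_left_comm, Tr_pow_mul], ?_, fun g hg => Tr_pow_pred_mul_mem_span p hg⟩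
  have hB : degreeOf 1 (X 2 ^ 2 * X 3 ^ 2 - X 0 ^ 2 * X 3 : MvPolynomial (Fin 4) k) = 0 :=
    Nat.le_zero.mp <| (degreeOf_sub_le _ _ _).trans <| by
      simp [degreeOf_mul_X_pow_of_ne, degreeOf_X_pow_of_ne, degreeOf_mul_X_of_ne]
  have hf₂' : f₂ = ∏ j, X j + (X 2 ^ 2 * X 3 ^ 2 - X 0 ^ 2 * X 3) := by
    rw [hf₂, Fin.prod_univ_four]; ring
  rw [mul_one, hf₂', Tr_prod_X_add_pow_pred p 1 hB]

/-- For `f₂ = a₁b₁a₂b₂ - a₁²b₂ + a₂²b₂²` there is a weighting of the variables whose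
initial term of `f₂` is the squarefree monomial `a₁b₁a₂b₂`; consequently
`Tr(f₂^{p-1}·)` is a Frobenius splitting of `k[a₁,b₁,a₂,b₂]` compatibly splitting the
hypersurface `{f₂ = 0}`. -/
theorem stmt_19 {k : Type*} [Field k] [IsAlgClosed k] (p : ℕ) [Fact p.Prime] [CharP k p]
    [PerfectRing k p] (hp2 : 2 < p)
    (f₂ : MvPolynomial (Fin 4) k)
    (hf₂ : f₂ = X 0 * X 1 * X 2 * X 3 - X 0 ^ 2 * X 3 + X 2 ^ 2 * X 3 ^ 2)
    (φ : MvPolynomial (Fin 4) k → MvPolynomial (Fin 4) k)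
    (hφ : φ = fun g => Tr p 4 (f₂ ^ (p - 1) * g)) :
    (∃ w : Fin 4 → ℤ, ∀ d ∈ f₂.support, (∀ i, d i = 1) ∨
      ∑ i, w i * (d i : ℤ) < ∑ i, w i) ∧
    (∀ a b, φ (a + b) = φ a + φ b) ∧
    (∀ a b, φ (a ^ p * b) = a * φ b) ∧
    (φ 1 = 1) ∧
    (∀ g ∈ Ideal.span {f₂}, φ g ∈ Ideal.span {f₂}) :=
  stmt_19_general p f₂ hf₂ φ hφ
end
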